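/- arXiv:0808.2028 — 4 statements merged into one kernel-verified Lean document; each statement's English description precedes it below -/
import Mathlib

section
/- Let n ≥ 1, let Ω ⊆ ℝⁿ be an open set, let 1 < p < ∞ and let q = p/(p−1) be the conjugate exponent. Suppose X : ℝⁿ → ℝⁿ is a C¹ vector field and m is a real number such that (1−p)‖X(x)‖^q + div X(x) ≥ m for every x ∈ Ω. Then for every nonnegative smooth function f : ℝⁿ → ℝ with compact support contained in Ω one has ∫_Ω ‖∇f‖^p dx ≥ m ∫_Ω f^p dx. (This is the Euclidean case of Theorem 2: μ*_p(M) ≥ sup_X inf_Ω((1−p)‖X‖^q + Div X).) -/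
open MeasureTheory

/-- The divergence of a vector field on Euclidean space: the trace of its derivative. -/
noncomputable def ediv {n : ℕ} (X : EuclideanSpace ℝ (Fin n) → EuclideanSpace ℝ (Fin n))
    (x : EuclideanSpace ℝ (Fin n)) : ℝ :=
  LinearMap.trace ℝ (EuclideanSpace ℝ (Fin n)) (fderiv ℝ X x).toLinearMap

private lemma trace_clm {n : ℕ}
    (A : EuclideanSpace ℝ (Fin n) →L[ℝ] EuclideanSpace ℝ (Fin n)) :
    LinearMap.trace ℝ (EuclideanSpace ℝ (Fin n)) A.toLinearMap
      = ∑ i, A (EuclideanSpace.single i 1) i := by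
  classical
  rw [LinearMap.trace_eq_matrix_trace ℝ (EuclideanSpace.basisFun (Fin n) ℝ).toBasis]
  simp [Matrix.trace, Matrix.diag, LinearMap.toMatrix_apply,
    EuclideanSpace.basisFun_apply, EuclideanSpace.basisFun_repr]

private lemma clm_apply_eq_sum {n : ℕ} (L : EuclideanSpace ℝ (Fin n) →L[ℝ] ℝ)
    (v : EuclideanSpace ℝ (Fin n)) :
    L v = ∑ i, v i * L (EuclideanSpace.single i 1) := by
  classical
  conv_lhs => rw [← (EuclideanSpace.basisFun (Fin n) ℝ).sum_repr v]
  rw [map_sum]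
  simp [EuclideanSpace.basisFun_apply, EuclideanSpace.basisFun_repr, smul_eq_mul]

/-- Euclidean case of Theorem 2: μ*_p(M) ≥ sup_X inf_Ω ((1−p)‖X‖^q + Div X). -/
theorem stmt1 {n : ℕ} (hn : 1 ≤ n) (Ω : Set (EuclideanSpace ℝ (Fin n))) (hΩ : IsOpen Ω)
    (p q : ℝ) (hp : 1 < p) (hq : q = p / (p - 1))
    (X : EuclideanSpace ℝ (Fin n) → EuclideanSpace ℝ (Fin n)) (hX : ContDiff ℝ 1 X)
    (m : ℝ) (hm : ∀ x ∈ Ω, m ≤ (1 - p) * ‖X x‖ ^ q + ediv X x)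
    (f : EuclideanSpace ℝ (Fin n) → ℝ) (hf : ContDiff ℝ (⊤ : ℕ∞) f)
    (hf0 : ∀ x, 0 ≤ f x) (hfc : HasCompactSupport f) (hsupp : tsupport f ⊆ Ω) :
    m * ∫ x in Ω, (f x) ^ p ≤ ∫ x in Ω, ‖gradient f x‖ ^ p := by
  classical
  have hp0 : (0:ℝ) < p := one_pos.trans hp
  have hp1 : (0:ℝ) < p - 1 := sub_pos.2 hp
  have hpq : p.HolderConjugate q := (Real.holderConjugate_iff_eq_conjExponent hp).2 hq
  have hq0 : (0:ℝ) < q := hpq.symm.pos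
  have hpq' : (p - 1) * q = p := hpq.sub_one_mul_conj
  have hfd : Differentiable ℝ f := hf.differentiable (by simp)
  have hXd : Differentiable ℝ X := hX.differentiable one_ne_zero
  have hfC : Continuous f := hf.continuous
  have hXC : Continuous X := hX.continuous
  have hfderC : Continuous (fderiv ℝ f) := hf.continuous_fderiv (by simp)
  have hXderC : Continuous (fderiv ℝ X) := hX.continuous_fderiv one_ne_zero
  set F : EuclideanSpace ℝ (Fin n) → ℝ := fun x => f x ^ p with hFdef
  have hFC : Continuous F := hfC.rpow_const fun x => Or.inr hp0.le
  have hF0 : ∀ x, 0 ≤ F x := fun x => Real.rpow_nonneg (hf0 x) p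
  have hFz : ∀ x, f x = 0 → F x = 0 := fun x h => by
    simp [hFdef, h, Real.zero_rpow hp0.ne']
  have hFder : ∀ x, HasFDerivAt F ((p * f x ^ (p - 1)) • fderiv ℝ f x) x :=
    fun x => (hfd x).hasFDerivAt.rpow_const (Or.inr hp.le)
  have hfz : ∀ x, x ∉ tsupport f → f x = 0 := fun x hx =>
    image_eq_zero_of_notMem_tsupport hx
  have hdfz : ∀ x, x ∉ tsupport f → fderiv ℝ f x = 0 := fun x hx =>
    Function.support_subset_iff'.1 (support_fderiv_subset ℝ) x hx
  have hΩz : ∀ x, x ∉ Ω → x ∉ tsupport f := fun x hx hmem => hx (hsupp hmem)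
  -- integrability helper
  have hint : ∀ g : EuclideanSpace ℝ (Fin n) → ℝ, Continuous g →
      (∀ x, x ∉ tsupport f → g x = 0) → Integrable g := fun g hg h0 =>
    hg.integrable_of_hasCompactSupport (HasCompactSupport.intro hfc h0)
  -- divergence as a sum of coordinate derivatives
  have hdiv : ∀ x, ediv X x = ∑ i, fderiv ℝ X x (EuclideanSpace.single i 1) i :=
    fun x => trace_clm _
  have cont_i : ∀ i : Fin n,
      Continuous fun x => fderiv ℝ X x (EuclideanSpace.single i 1) i := fun i =>
    (EuclideanSpace.proj i).continuous.comp (hXderC.clm_apply continuous_const)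
  have hdivC : Continuous fun x => ediv X x := by
    have : (fun x => ediv X x)
        = fun x => ∑ i, fderiv ℝ X x (EuclideanSpace.single i 1) i := funext hdiv
    rw [this]
    exact continuous_finset_sum _ fun i _ => cont_i i
  -- integrability of all the integrands
  have intF : Integrable F := hint F hFC fun x hx => hFz x (hfz x hx)
  have int_mF : Integrable fun x => m * F x := intF.const_mul m
  have hXnq : Continuous fun x => ‖X x‖ ^ q :=
    hXC.norm.rpow_const fun x => Or.inr hq0.le
  have int_qF : Integrable fun x => (1 - p) * ‖X x‖ ^ q * F x :=
    hint _ ((continuous_const.mul hXnq).mul hFC)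
      fun x hx => by simp [hFz x (hfz x hx)]
  have int_Fdiv : Integrable fun x => F x * ediv X x :=
    hint _ (hFC.mul hdivC) fun x hx => by simp [hFz x (hfz x hx)]
  have int_Fdx : ∀ i : Fin n,
      Integrable fun x => F x * fderiv ℝ X x (EuclideanSpace.single i 1) i := fun i =>
    hint _ (hFC.mul (cont_i i)) fun x hx => by simp [hFz x (hfz x hx)]
  have hfp1C : Continuous fun x => f x ^ (p - 1) :=
    hfC.rpow_const fun x => Or.inr hp1.le
  have int_pf : ∀ i : Fin n, Integrable fun x =>
      ((p * f x ^ (p - 1)) * fderiv ℝ f x (EuclideanSpace.single i 1)) * X x i := fun i =>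
    hint _ (((continuous_const.mul hfp1C).mul
        (hfderC.clm_apply continuous_const)).mul
        ((EuclideanSpace.proj i).continuous.comp hXC))
      fun x hx => by simp [hfz x hx, Real.zero_rpow hp1.ne']
  have int_pfX : Integrable fun x => (p * f x ^ (p - 1)) * fderiv ℝ f x (X x) :=
    hint _ ((continuous_const.mul hfp1C).mul (hfderC.clm_apply hXC))
      fun x hx => by simp [hfz x hx, Real.zero_rpow hp1.ne']
  have int_norm : Integrable fun x => ‖fderiv ℝ f x‖ ^ p :=
    hint _ (hfderC.norm.rpow_const fun x => Or.inr hp0.le)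
      fun x hx => by simp [hdfz x hx, Real.zero_rpow hp0.ne']
  -- integration by parts, coordinatewise
  have ibp_i : ∀ i : Fin n,
      ∫ x, F x * fderiv ℝ X x (EuclideanSpace.single i 1) i
        = - ∫ x, ((p * f x ^ (p - 1)) * fderiv ℝ f x (EuclideanSpace.single i 1)) * X x i := by
    intro i
    have h := integral_bilinear_hasFDerivAt_right_eq_neg_left_of_integrable
      (μ := volume) (B := ContinuousLinearMap.mul ℝ ℝ)
      (f := F) (f' := fun x => (p * f x ^ (p - 1)) • fderiv ℝ f x)
      (g := fun x => X x i)
      (g' := fun x => (EuclideanSpace.proj i).comp (fderiv ℝ X x))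
      (v := EuclideanSpace.single i 1)
      (by simpa using int_pf i) (by simpa using int_Fdx i)
      (hint _ (hFC.mul ((EuclideanSpace.proj i).continuous.comp hXC))
        fun x hx => by simp [hFz x (hfz x hx)])
      (fun x _ => hFder x)
      (fun x _ => by exact (EuclideanSpace.proj i).hasFDerivAt.comp x (hXd x).hasFDerivAt)
    simpa using h
  -- the divergence identity ∫ F div X = -∫ p f^(p-1) df(X)
  have ibp : ∫ x, F x * ediv X x
      = - ∫ x, (p * f x ^ (p - 1)) * fderiv ℝ f x (X x) := by
    calc ∫ x, F x * ediv X x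
        = ∫ x, ∑ i, F x * fderiv ℝ X x (EuclideanSpace.single i 1) i := by
          congr 1; funext x; rw [hdiv x, Finset.mul_sum]
      _ = ∑ i, ∫ x, F x * fderiv ℝ X x (EuclideanSpace.single i 1) i :=
          integral_finset_sum _ fun i _ => int_Fdx i
      _ = ∑ i, - ∫ x, ((p * f x ^ (p - 1)) * fderiv ℝ f x (EuclideanSpace.single i 1)) * X x i :=
          Finset.sum_congr rfl fun i _ => ibp_i i
      _ = - ∑ i, ∫ x, ((p * f x ^ (p - 1)) * fderiv ℝ f x (EuclideanSpace.single i 1)) * X x i := by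
          rw [Finset.sum_neg_distrib]
      _ = - ∫ x, ∑ i, ((p * f x ^ (p - 1)) * fderiv ℝ f x (EuclideanSpace.single i 1)) * X x i := by
          rw [integral_finset_sum _ fun i _ => int_pf i]
      _ = - ∫ x, (p * f x ^ (p - 1)) * fderiv ℝ f x (X x) := by
          have heq : (fun x => ∑ i, ((p * f x ^ (p - 1)) * fderiv ℝ f x (EuclideanSpace.single i 1)) * X x i)
              = fun x => (p * f x ^ (p - 1)) * fderiv ℝ f x (X x) := by
            funext x
            rw [clm_apply_eq_sum (fderiv ℝ f x) (X x), Finset.mul_sum]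
            exact Finset.sum_congr rfl fun i _ => by ring
          rw [heq]
  -- pointwise inequality from the hypothesis on Ω
  have pw1 : ∀ x, m * F x ≤ (1 - p) * ‖X x‖ ^ q * F x + F x * ediv X x := by
    intro x
    by_cases hx : x ∈ Ω
    · have h1 := mul_le_mul_of_nonneg_right (hm x hx) (hF0 x)
      calc m * F x ≤ ((1 - p) * ‖X x‖ ^ q + ediv X x) * F x := h1
        _ = (1 - p) * ‖X x‖ ^ q * F x + F x * ediv X x := by ring
    · have hfx : F x = 0 := hFz x (hfz x (hΩz x hx))
      simp [hfx]
  -- pointwise Young inequality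
  have young : ∀ x, (1 - p) * ‖X x‖ ^ q * F x - (p * f x ^ (p - 1)) * fderiv ℝ f x (X x)
      ≤ ‖fderiv ℝ f x‖ ^ p := by
    intro x
    set a : ℝ := ‖fderiv ℝ f x‖ with ha_def
    set b : ℝ := f x ^ (p - 1) * ‖X x‖ with hb_def
    have ha : 0 ≤ a := norm_nonneg _
    have hb : 0 ≤ b := mul_nonneg (Real.rpow_nonneg (hf0 x) _) (norm_nonneg _)
    have hY : a * b ≤ a ^ p / p + b ^ q / q := Real.young_inequality_of_nonneg ha hb hpq
    have hbq : b ^ q = F x * ‖X x‖ ^ q := by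
      rw [hb_def, Real.mul_rpow (Real.rpow_nonneg (hf0 x) _) (norm_nonneg _),
        ← Real.rpow_mul (hf0 x), hpq']
    have hineq : -(fderiv ℝ f x (X x)) ≤ a * ‖X x‖ := by
      have h1 := (fderiv ℝ f x).le_opNorm (X x)
      rw [Real.norm_eq_abs] at h1
      linarith [neg_abs_le (fderiv ℝ f x (X x))]
    have hpf : 0 ≤ p * f x ^ (p - 1) :=
      mul_nonneg hp0.le (Real.rpow_nonneg (hf0 x) _)
    have h3 : p * (a * b) ≤ a ^ p + (p - 1) * b ^ q := by
      have h4 := mul_le_mul_of_nonneg_left hY hp0.le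
      have hq' : p / q = p - 1 := hpq.div_conj_eq_sub_one
      calc p * (a * b) ≤ p * (a ^ p / p + b ^ q / q) := h4
        _ = a ^ p + (p / q) * b ^ q := by
            field_simp
        _ = a ^ p + (p - 1) * b ^ q := by rw [hq']
    have h5 : -((p * f x ^ (p - 1)) * fderiv ℝ f x (X x)) ≤ p * (a * b) := by
      have h6 := mul_le_mul_of_nonneg_left hineq hpf
      calc -((p * f x ^ (p - 1)) * fderiv ℝ f x (X x))
          = (p * f x ^ (p - 1)) * -(fderiv ℝ f x (X x)) := by ring
        _ ≤ (p * f x ^ (p - 1)) * (a * ‖X x‖) := h6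
        _ = p * (a * b) := by rw [hb_def]; ring
    rw [hbq] at h3
    linarith [h3, h5]
  -- transfer set integrals to integrals over the whole space
  have e1 : ∫ x in Ω, (f x) ^ p = ∫ x, F x :=
    setIntegral_eq_integral_of_forall_compl_eq_zero fun x hx =>
      hFz x (hfz x (hΩz x hx))
  have hng : ∀ x, ‖gradient f x‖ = ‖fderiv ℝ f x‖ := fun x =>
    LinearIsometryEquiv.norm_map (InnerProductSpace.toDual ℝ _).symm _
  have e2 : ∫ x in Ω, ‖gradient f x‖ ^ p = ∫ x, ‖fderiv ℝ f x‖ ^ p := by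
    rw [setIntegral_eq_integral_of_forall_compl_eq_zero (f := fun x => ‖gradient f x‖ ^ p)
      (fun x hx => by
        simp only [hng x, hdfz x (hΩz x hx)]
        simp [Real.zero_rpow hp0.ne'])]
    simp_rw [hng]
  rw [e1, e2]
  calc m * ∫ x, F x = ∫ x, m * F x := (integral_const_mul m F).symm
    _ ≤ ∫ x, ((1 - p) * ‖X x‖ ^ q * F x + F x * ediv X x) :=
        integral_mono int_mF (int_qF.add int_Fdiv) pw1
    _ = (∫ x, (1 - p) * ‖X x‖ ^ q * F x) + ∫ x, F x * ediv X x :=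
        integral_add int_qF int_Fdiv
    _ = (∫ x, (1 - p) * ‖X x‖ ^ q * F x)
        - ∫ x, (p * f x ^ (p - 1)) * fderiv ℝ f x (X x) := by rw [ibp]; ring
    _ = ∫ x, ((1 - p) * ‖X x‖ ^ q * F x - (p * f x ^ (p - 1)) * fderiv ℝ f x (X x)) :=
        (integral_sub int_qF int_pfX).symm
    _ ≤ ∫ x, ‖fderiv ℝ f x‖ ^ p := integral_mono (int_qF.sub int_pfX) int_norm young
end

section
/- Let n ≥ 1, R > 0 and 1 < p < ∞. For every nonnegative smooth function f : ℝⁿ → ℝ with compact support contained in the open ball B_R(0) ⊆ ℝⁿ, one has ∫_{B_R(0)} ‖∇f‖^p dx ≥ (n/(pR))^p ∫_{B_R(0)} f^p dx. (This is the Euclidean, zero-curvature instance of the paper's geodesic-ball estimate μ*_p(B_R) ≥ ((1+(n−1)·inf ρ·μ_f(ρ))/(pR))^p, obtained from the vector field X(x) = x.) -/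
open MeasureTheory Set

lemma coord_le_norm {m : ℕ} (y : Fin m → ℝ) (i : Fin m) :
    |y i| ≤ ‖(EuclideanSpace.equiv (Fin m) ℝ).symm y‖ := by
  rw [EuclideanSpace.norm_eq, ← Real.sqrt_sq_eq_abs]
  apply Real.sqrt_le_sqrt
  have hy : ((EuclideanSpace.equiv (Fin m) ℝ).symm y) i = y i := rfl
  calc (y i)^2 = ‖((EuclideanSpace.equiv (Fin m) ℝ).symm y) i‖^2 := by
        rw [hy, Real.norm_eq_abs, sq_abs]
    _ ≤ ∑ j, ‖((EuclideanSpace.equiv (Fin m) ℝ).symm y) j‖^2 :=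
        Finset.single_le_sum (f := fun j => ‖((EuclideanSpace.equiv (Fin m) ℝ).symm y) j‖^2)
          (fun j _ => sq_nonneg _) (Finset.mem_univ i)

/-- Divergence-type identity for compactly supported C¹ functions. -/
lemma div_int_zero {m : ℕ} {R : ℝ} (hR : 0 < R)
    (g : EuclideanSpace ℝ (Fin (m+1)) → ℝ)
    (g' : EuclideanSpace ℝ (Fin (m+1)) → EuclideanSpace ℝ (Fin (m+1)) →L[ℝ] ℝ)
    (hd : ∀ x, HasFDerivAt g (g' x) x) (hc' : Continuous g')
    (h0 : ∀ x : EuclideanSpace ℝ (Fin (m+1)), R ≤ ‖x‖ → g x = 0 ∧ g' x = 0) :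
    ∫ x : EuclideanSpace ℝ (Fin (m+1)), (g' x x + (m+1) * g x) = 0 := by
  classical
  set P := (Fin (m+1) → ℝ)
  set Φ := (EuclideanSpace.equiv (Fin (m+1)) ℝ)
  set G : P → ℝ := fun x => g (Φ.symm x) with hG
  set G' : P → P →L[ℝ] ℝ := fun x =>
    (g' (Φ.symm x)).comp (Φ.symm : P →L[ℝ] EuclideanSpace ℝ (Fin (m+1))) with hG'
  have hgc : Continuous g := by
    rw [continuous_iff_continuousAt]; exact fun x => (hd x).continuousAt
  have hGc : Continuous G := hgc.comp Φ.symm.continuous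
  have hGd : ∀ x : P, HasFDerivAt G (G' x) x := fun x =>
    (hd (Φ.symm x)).comp x (Φ.symm.toContinuousLinearMap.hasFDerivAt)
  set a : P := fun _ => -R with ha
  set b : P := fun _ => R with hb
  have hle : a ≤ b := fun i => by simp only [ha, hb]; linarith
  set F : Fin (m+1) → P → ℝ := fun i x => G x * x i with hF
  set F' : Fin (m+1) → P → P →L[ℝ] ℝ := fun i x =>
    G x • ContinuousLinearMap.proj i + x i • G' x with hF'
  have hFd : ∀ (x : P) (i : Fin (m+1)), HasFDerivAt (F i) (F' i x) x := by
    intro x i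
    have := (hGd x).mul ((ContinuousLinearMap.proj i : P →L[ℝ] ℝ).hasFDerivAt (x := x))
    exact this
  have hdiv : ∀ x : P, (∑ i, F' i x (Pi.single i 1)) = G' x x + (m+1) * G x := by
    intro x
    have h1 : ∀ i : Fin (m+1), F' i x (Pi.single i 1)
        = G x + x i * G' x (Pi.single i 1) := by
      intro i
      have : (ContinuousLinearMap.proj i : P →L[ℝ] ℝ) (Pi.single i 1) = 1 := by
        simp [ContinuousLinearMap.proj_apply, Pi.single_eq_same]
      simp [hF', this, smul_eq_mul]
    have hx : ∑ i : Fin (m+1), (x i) • (Pi.single i (1:ℝ) : P) = x := by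
      ext j; simp [Finset.sum_apply, Pi.single_apply]
    have h2 : (∑ i : Fin (m+1), x i * G' x (Pi.single i 1)) = G' x x := by
      calc ∑ i : Fin (m+1), x i * G' x (Pi.single i 1)
          = ∑ i : Fin (m+1), G' x ((x i) • (Pi.single i (1:ℝ) : P)) := by
            simp [ContinuousLinearMap.map_smul, smul_eq_mul]
        _ = G' x (∑ i : Fin (m+1), (x i) • (Pi.single i (1:ℝ) : P)) := (map_sum _ _ _).symm
        _ = G' x x := by rw [hx]
    rw [Finset.sum_congr rfl (fun i _ => h1 i), Finset.sum_add_distrib, h2]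
    simp [Finset.sum_const]
    ring
  have hdivc : Continuous (fun x : P => G' x x + (m+1) * G x) :=
    (((hc'.comp Φ.symm.continuous).clm_apply Φ.symm.continuous).add
      (continuous_const.mul hGc))
  -- vanishing of G, G' when some coordinate has |·| ≥ R
  have hvan : ∀ x : P, ∀ i : Fin (m+1), R ≤ |x i| → G x = 0 ∧ G' x = 0 := by
    intro x i hxi
    have hnorm : R ≤ ‖Φ.symm x‖ := le_trans hxi (coord_le_norm x i)
    obtain ⟨h1, h2⟩ := h0 (Φ.symm x) hnorm
    refine ⟨h1, ?_⟩
    simp only [hG', h2]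
    ext v; simp
  have Hc : ∀ i, ContinuousOn (F i) (Icc a b) :=
    fun i => (hGc.mul (continuous_apply i)).continuousOn
  have Hd : ∀ x ∈ (Set.pi univ fun i => Ioo (a i) (b i)) \ (∅ : Set P),
      ∀ i, HasFDerivAt (F i) (F' i x) x := fun x _ i => hFd x i
  have Hi : IntegrableOn (fun x => ∑ i, F' i x (Pi.single i 1)) (Icc a b) := by
    have h : IntegrableOn (fun x : P => G' x x + (m+1) * G x) (Icc a b) :=
      hdivc.continuousOn.integrableOn_compact isCompact_Icc
    exact h.congr_fun (fun x _ => (hdiv x).symm) measurableSet_Icc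
  have key := integral_divergence_of_hasFDerivAt_off_countable' a b hle F F' ∅
    countable_empty Hc Hd Hi
  -- faces vanish
  have hfaces : ∀ i : Fin (m+1), ∀ (c : ℝ), |c| = R →
      (∫ x in Icc (a ∘ i.succAbove) (b ∘ i.succAbove), F i (i.insertNth c x)) = 0 := by
    intro i c hc
    have : ∀ x : Fin m → ℝ, F i (i.insertNth c x) = 0 := by
      intro x
      have hcoord : (i.insertNth c x : P) i = c := by simp
      have := (hvan (i.insertNth c x) i (by rw [hcoord, hc])).1
      simp [hF, this]
    simp [this]
  have hRHS : (∑ i : Fin (m+1),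
      ((∫ x in Icc (a ∘ i.succAbove) (b ∘ i.succAbove), F i (i.insertNth (b i) x)) -
        ∫ x in Icc (a ∘ i.succAbove) (b ∘ i.succAbove), F i (i.insertNth (a i) x))) = 0 := by
    refine Finset.sum_eq_zero fun i _ => ?_
    rw [hfaces i (b i) (by simp [hb, abs_of_pos hR]),
      hfaces i (a i) (by simp [ha, abs_of_pos hR]), sub_zero]
  -- pass from box to whole space
  have hout : ∀ x : P, x ∉ Icc a b → (G' x x + (m+1) * G x) = 0 := by
    intro x hx
    have : ∃ i, R ≤ |x i| := by
      by_contra h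
      push_neg at h
      refine hx ⟨fun i => ?_, fun i => ?_⟩
      · have := (abs_lt.mp (h i)).1
        show -R ≤ x i
        linarith
      · have := (abs_lt.mp (h i)).2
        show x i ≤ R
        linarith
    obtain ⟨i, hi⟩ := this
    obtain ⟨h1, h2⟩ := hvan x i hi
    simp [h1, h2]
  have hbox : ∫ x in Icc a b, (G' x x + (m+1) * G x) = ∫ x : P, (G' x x + (m+1) * G x) :=
    setIntegral_eq_integral_of_forall_compl_eq_zero hout
  have hP : ∫ x : P, (G' x x + (m+1) * G x) = 0 := by
    calc ∫ x : P, (G' x x + (m+1) * G x)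
        = ∫ x in Icc a b, (G' x x + (m+1) * G x) := hbox.symm
      _ = ∫ x in Icc a b, ∑ i, F' i x (Pi.single i 1) :=
          (setIntegral_congr_fun measurableSet_Icc (fun x _ => hdiv x)).symm
      _ = 0 := key.trans hRHS
  -- transfer to EuclideanSpace
  have htrans := (EuclideanSpace.volume_preserving_symm_measurableEquiv_toLp (Fin (m+1))).integral_comp
    (MeasurableEquiv.toLp 2 (Fin (m+1) → ℝ)).symm.measurableEmbedding
    (fun x : P => G' x x + (m+1) * G x)
  rw [hP] at htrans
  exact htrans

/-- Euclidean (zero-curvature) instance of the geodesic-ball estimate: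
μ*_p(B_R(0)) ≥ (n/(pR))^p. -/
theorem stmt2 {n : ℕ} (hn : 1 ≤ n) (R : ℝ) (hR : 0 < R) (p : ℝ) (hp : 1 < p)
    (f : EuclideanSpace ℝ (Fin n) → ℝ) (hf : ContDiff ℝ (⊤ : ℕ∞) f)
    (hf0 : ∀ x, 0 ≤ f x) (hfc : HasCompactSupport f)
    (hsupp : tsupport f ⊆ Metric.ball (0 : EuclideanSpace ℝ (Fin n)) R) :
    ((n : ℝ) / (p * R)) ^ p * ∫ x in Metric.ball (0 : EuclideanSpace ℝ (Fin n)) R, (f x) ^ p ≤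
      ∫ x in Metric.ball (0 : EuclideanSpace ℝ (Fin n)) R, ‖gradient f x‖ ^ p := by
  obtain ⟨m, rfl⟩ : ∃ m, n = m + 1 := ⟨n - 1, by omega⟩
  have hp0 : (0:ℝ) < p := lt_trans one_pos hp
  have hp1 : (0:ℝ) < p - 1 := by linarith
  set q := Real.conjExponent p with hqdef
  have hpq : p.HolderConjugate q := Real.HolderConjugate.conjExponent hp
  have hq0 : q ≠ 0 := hpq.symm.ne_zero
  set B := Metric.ball (0 : EuclideanSpace ℝ (Fin (m+1))) R with hBdef
  set Df := fderiv ℝ f with hDf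
  have hfd : ∀ x, HasFDerivAt f (Df x) x := fun x =>
    ((hf.differentiable (by simp)) x).hasFDerivAt
  set g : EuclideanSpace ℝ (Fin (m+1)) → ℝ := fun x => f x ^ p with hg
  set g' : EuclideanSpace ℝ (Fin (m+1)) → EuclideanSpace ℝ (Fin (m+1)) →L[ℝ] ℝ :=
    fun x => (p * f x ^ (p-1)) • Df x with hg'
  have hgd : ∀ x, HasFDerivAt g (g' x) x := fun x =>
    (Real.hasDerivAt_rpow_const (Or.inr hp.le)).comp_hasFDerivAt x (hfd x)
  have hfcont : Continuous f := hf.continuous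
  have hDfc : Continuous Df := hf.continuous_fderiv (by simp)
  have hfp1c : Continuous (fun x => f x ^ (p-1)) :=
    hfcont.rpow_const (fun x => Or.inr hp1.le)
  have hg'c : Continuous g' := (continuous_const.mul hfp1c).smul hDfc
  have h0 : ∀ x : EuclideanSpace ℝ (Fin (m+1)), R ≤ ‖x‖ → g x = 0 ∧ g' x = 0 := by
    intro x hx
    have hxB : x ∉ B := by
      rw [hBdef, Metric.mem_ball, dist_zero_right]; exact not_lt.2 hx
    have hfx : f x = 0 := image_eq_zero_of_notMem_tsupport (fun hxt => hxB (hsupp hxt))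
    constructor
    · simp [hg, hfx, Real.zero_rpow hp0.ne']
    · simp [hg', hfx, Real.zero_rpow (by linarith : p - 1 ≠ 0)]
  have div0 := div_int_zero hR g g' hgd hg'c h0
  have hgradnorm : ∀ x, ‖gradient f x‖ = ‖Df x‖ := fun x =>
    (InnerProductSpace.toDual ℝ _).symm.norm_map (Df x)
  have hgradc : Continuous (fun x => gradient f x) :=
    (InnerProductSpace.toDual ℝ _).symm.continuous.comp hDfc
  have hIntOn : ∀ (h : EuclideanSpace ℝ (Fin (m+1)) → ℝ), Continuous h → IntegrableOn h B := by
    intro h hc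
    exact (hc.continuousOn.integrableOn_compact (isCompact_closedBall 0 R)).mono_set
      Metric.ball_subset_closedBall
  have hInt1 : IntegrableOn (fun x => f x ^ p) B :=
    hIntOn _ (hfcont.rpow_const fun x => Or.inr hp0.le)
  have hInt2 : IntegrableOn (fun x => ‖gradient f x‖ ^ p) B :=
    hIntOn _ (hgradc.norm.rpow_const fun x => Or.inr hp0.le)
  have hInt3 : IntegrableOn (fun x => f x ^ (p-1) * ‖gradient f x‖) B :=
    hIntOn _ (hfp1c.mul hgradc.norm)
  have hInt4 : IntegrableOn (fun x => g' x x) B := hIntOn _ (hg'c.clm_apply continuous_id)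
  set A := ∫ x in B, f x ^ p with hA
  set Bi := ∫ x in B, ‖gradient f x‖ ^ p with hBi
  have hA0 : 0 ≤ A :=
    setIntegral_nonneg measurableSet_ball (fun x _ => Real.rpow_nonneg (hf0 x) p)
  set N : ℝ := (m:ℝ) + 1 with hN
  have hN0 : (0:ℝ) < N := by positivity
  have hpR : (0:ℝ) < p * R := by positivity
  have hrestrict : ∫ x in B, (g' x x + N * g x) = 0 := by
    rw [setIntegral_eq_integral_of_forall_compl_eq_zero (fun x hx => ?_)]
    · exact div0
    · have hnx : R ≤ ‖x‖ := by
        by_contra hlt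
        exact hx (by rw [hBdef, Metric.mem_ball, dist_zero_right]; linarith)
      obtain ⟨h1, h2⟩ := h0 x hnx
      simp [h1, h2]
  have hsplit : (∫ x in B, g' x x) + N * A = 0 := by
    rw [integral_add hInt4 (hInt1.const_mul N), integral_const_mul] at hrestrict
    exact hrestrict
  have hstep1 : N * A ≤ (p*R) * ∫ x in B, f x ^ (p-1) * ‖gradient f x‖ := by
    have hNA : N * A = ∫ x in B, -(g' x x) := by rw [integral_neg]; linarith
    rw [hNA, ← integral_const_mul]
    refine setIntegral_mono_on hInt4.neg (hInt3.const_mul _) measurableSet_ball ?_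
    intro x hx
    have hxR : ‖x‖ ≤ R := le_of_lt (mem_ball_zero_iff.mp hx)
    have hcnn : (0:ℝ) ≤ p * f x ^ (p-1) := mul_nonneg hp0.le (Real.rpow_nonneg (hf0 x) _)
    have happ : g' x x = (p * f x ^ (p-1)) * (Df x x) := by
      simp [hg', smul_eq_mul]
    calc -(g' x x) = (p * f x ^ (p-1)) * (-(Df x x)) := by rw [happ]; ring
      _ ≤ (p * f x ^ (p-1)) * |Df x x| :=
          mul_le_mul_of_nonneg_left (neg_le_abs _) hcnn
      _ ≤ (p * f x ^ (p-1)) * (‖Df x‖ * ‖x‖) :=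
          mul_le_mul_of_nonneg_left
            (by simpa [Real.norm_eq_abs] using (Df x).le_opNorm x) hcnn
      _ ≤ (p * f x ^ (p-1)) * (‖Df x‖ * R) :=
          mul_le_mul_of_nonneg_left
            (mul_le_mul_of_nonneg_left hxR (norm_nonneg _)) hcnn
      _ = (p * R) * (f x ^ (p-1) * ‖gradient f x‖) := by rw [hgradnorm x]; ring
  set c := (N/(p*R)) ^ (1/q) with hc
  have hNpR : (0:ℝ) < N/(p*R) := by positivity
  have hc0 : (0:ℝ) < c := Real.rpow_pos_of_pos hNpR _
  have hcq : c ^ q = N/(p*R) := by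
    rw [hc, ← Real.rpow_mul hNpR.le, one_div, inv_mul_cancel₀ hq0, Real.rpow_one]
  have hyoung : ∀ x ∈ B, f x ^ (p-1) * ‖gradient f x‖
      ≤ c^q/q * f x ^ p + ‖gradient f x‖^p/(c^p * p) := by
    intro x _
    have h1 : f x ^ (p-1) * ‖gradient f x‖
        = (c * f x ^ (p-1)) * (‖gradient f x‖ / c) := by field_simp
    rw [h1]
    refine le_trans (Real.young_inequality_of_nonneg
      (mul_nonneg hc0.le (Real.rpow_nonneg (hf0 x) _))
      (div_nonneg (norm_nonneg _) hc0.le) hpq.symm) (le_of_eq ?_)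
    rw [Real.mul_rpow hc0.le (Real.rpow_nonneg (hf0 x) _),
      ← Real.rpow_mul (hf0 x), hpq.sub_one_mul_conj,
      Real.div_rpow (norm_nonneg _) hc0.le]
    ring
  have hstep2 : (∫ x in B, f x ^ (p-1) * ‖gradient f x‖) ≤ c^q/q * A + Bi/(c^p * p) := by
    have h := setIntegral_mono_on hInt3
      ((hInt1.const_mul _).add (hInt2.div_const _)) measurableSet_ball hyoung
    simp only [Pi.add_apply] at h
    rwa [integral_add (hInt1.const_mul _) (hInt2.div_const _), integral_const_mul,
      integral_div] at h
  have hmain : N * A ≤ (p*R) * (c^q/q * A + Bi/(c^p * p)) :=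
    le_trans hstep1 (mul_le_mul_of_nonneg_left hstep2 hpR.le)
  have hcp0 : (0:ℝ) < c ^ p := Real.rpow_pos_of_pos hc0 _
  have hdiv1 : (p*R) * (c^q/q * A) = N/q * A := by
    rw [hcq]; field_simp
  have h2 : (p*R) * (Bi/(c^p * p)) = (R/c^p) * Bi := by
    field_simp
  have h3 : N - N/q = N/p := by
    rw [div_eq_mul_inv, div_eq_mul_inv, ← hpq.symm.one_sub_inv]; ring
  have hfinal1 : (N/p) * A ≤ (R/c^p) * Bi := by
    have h4 := hmain
    rw [mul_add, hdiv1, h2] at h4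
    have h5 : (N/p) * A = N*A - (N/q)*A := by rw [← sub_mul, h3]
    linarith
  have hcp : (N/(p*R)) * c^p = (N/(p*R))^p := by
    have hexp : (1:ℝ) + (1/q)*p = p := by
      have hdq : p / q = p - 1 := hpq.div_conj_eq_sub_one
      have : (1/q)*p = p/q := by ring
      rw [this, hdq]; ring
    calc (N/(p*R)) * c^p
        = (N/(p*R))^(1:ℝ) * (N/(p*R))^((1/q)*p) := by
          rw [Real.rpow_one, hc, ← Real.rpow_mul hNpR.le]
      _ = (N/(p*R))^(1 + (1/q)*p) := (Real.rpow_add hNpR _ _).symm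
      _ = (N/(p*R))^p := by rw [hexp]
  have hfinal2 : (N/(p*R))^p * A ≤ Bi := by
    have h5 : c^p/R * ((N/p)*A) = (N/(p*R)) * c^p * A := by field_simp
    have h6 : c^p/R * ((R/c^p)*Bi) = Bi := by field_simp
    calc (N/(p*R))^p * A = (N/(p*R)) * c^p * A := by rw [hcp]
      _ = c^p/R * ((N/p)*A) := h5.symm
      _ ≤ c^p/R * ((R/c^p)*Bi) :=
          mul_le_mul_of_nonneg_left hfinal1 (by positivity)
      _ = Bi := h6
  have hcast : ((m+1 : ℕ) : ℝ) = N := by push_cast [hN]; ring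
  rw [hcast]
  exact hfinal2
end

section
/- Let n ≥ 1 and 1 < p ≤ 2. Let h : ℝⁿ → ℝ be a C¹ function and χ : ℝⁿ → ℝ a nonnegative C¹ function with compact support, and set f(x) = e^{h(x)} χ(x). Then ∫ ‖∇f‖^p dx ≤ ∫ e^{p h(x)} [ χ(x)^p ‖∇h(x)‖^p + 2^{p/2} χ(x)^{p/2} ‖∇h(x)‖^{p/2} ‖∇χ(x)‖^{p/2} + ‖∇χ(x)‖^p ] dx. (This is inequality (bb) from the proof of the Brooks-type lemma.) -/
open MeasureTheory

lemma aux_rpow_subadd {p : ℝ} (hp : 0 ≤ p) (hp1 : p ≤ 1) {a b : ℝ} (ha : 0 ≤ a) (hb : 0 ≤ b) :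
    (a + b) ^ p ≤ a ^ p + b ^ p := by
  lift a to NNReal using ha
  lift b to NNReal using hb
  exact_mod_cast NNReal.rpow_add_le_add_rpow a b hp hp1

lemma aux_key {p : ℝ} (hp : 0 < p) (hp2 : p ≤ 2) {a b : ℝ} (ha : 0 ≤ a) (hb : 0 ≤ b) :
    (a + b) ^ p ≤ a ^ p + 2 ^ (p / 2) * a ^ (p / 2) * b ^ (p / 2) + b ^ p := by
  have hab : (0:ℝ) ≤ a + b := by positivity
  have hp2' : p / 2 ≤ 1 := by linarith
  have hp2'' : (0:ℝ) ≤ p / 2 := by linarith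
  have sq : ∀ c : ℝ, 0 ≤ c → (c * c) ^ (p / 2) = c ^ p := by
    intro c hc
    rw [show c * c = c ^ (2:ℝ) by rw [Real.rpow_two]; ring, ← Real.rpow_mul hc]
    ring_nf
  calc (a + b) ^ p = ((a + b) * (a + b)) ^ (p / 2) := by rw [sq _ hab]
    _ = (a * a + (2 * (a * b) + b * b)) ^ (p / 2) := by ring_nf
    _ ≤ (a * a) ^ (p / 2) + (2 * (a * b) + b * b) ^ (p / 2) := by
        apply aux_rpow_subadd hp2'' hp2' (by positivity) (by positivity)
    _ ≤ (a * a) ^ (p / 2) + ((2 * (a * b)) ^ (p / 2) + (b * b) ^ (p / 2)) := by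
        have := aux_rpow_subadd hp2'' hp2' (a := 2 * (a * b)) (b := b * b) (by positivity) (by positivity)
        linarith
    _ = a ^ p + 2 ^ (p / 2) * a ^ (p / 2) * b ^ (p / 2) + b ^ p := by
        rw [sq _ ha, sq _ hb, Real.mul_rpow (by norm_num) (by positivity),
          Real.mul_rpow ha hb]
        ring

/-- Inequality (bb) from the proof of the Brooks-type lemma. -/
theorem stmt11 {n : ℕ} (hn : 1 ≤ n) (p : ℝ) (hp1 : 1 < p) (hp2 : p ≤ 2)
    (h χ : EuclideanSpace ℝ (Fin n) → ℝ)
    (hh : ContDiff ℝ 1 h) (hχ : ContDiff ℝ 1 χ) (hχ0 : ∀ x, 0 ≤ χ x)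
    (hχc : HasCompactSupport χ)
    (f : EuclideanSpace ℝ (Fin n) → ℝ) (hf : ∀ x, f x = Real.exp (h x) * χ x) :
    ∫ x, ‖gradient f x‖ ^ p ≤
      ∫ x, Real.exp (p * h x) *
        ((χ x) ^ p * ‖gradient h x‖ ^ p +
          2 ^ (p / 2) * (χ x) ^ (p / 2) * ‖gradient h x‖ ^ (p / 2) * ‖gradient χ x‖ ^ (p / 2) +
          ‖gradient χ x‖ ^ p) := by
  have hp0 : (0:ℝ) < p := by linarith
  have hq2 : (0:ℝ) < p / 2 := by linarith
  have hfun : f = fun y => Real.exp (h y) * χ y := funext hf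
  set g : EuclideanSpace ℝ (Fin n) → ℝ := fun x => Real.exp (p * h x) *
        ((χ x) ^ p * ‖gradient h x‖ ^ p +
          2 ^ (p / 2) * (χ x) ^ (p / 2) * ‖gradient h x‖ ^ (p / 2) * ‖gradient χ x‖ ^ (p / 2) +
          ‖gradient χ x‖ ^ p) with hg
  -- pointwise bound
  have hpt : ∀ x, ‖gradient f x‖ ^ p ≤ g x := by
    intro x
    have hdh : HasFDerivAt h (fderiv ℝ h x) x := (hh.differentiable one_ne_zero x).hasFDerivAt
    have hdχ : HasFDerivAt χ (fderiv ℝ χ x) x := (hχ.differentiable one_ne_zero x).hasFDerivAt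
    have hdf : HasFDerivAt f
        (Real.exp (h x) • fderiv ℝ χ x + χ x • (Real.exp (h x) • fderiv ℝ h x)) x := by
      rw [hfun]; exact (hdh.exp).mul hdχ
    have normgrad : ∀ (u : EuclideanSpace ℝ (Fin n) → ℝ),
        ‖gradient u x‖ = ‖fderiv ℝ u x‖ := by
      intro u; simp [gradient]
    have ha : (0:ℝ) ≤ χ x * ‖gradient h x‖ := mul_nonneg (hχ0 x) (norm_nonneg _)
    have hb : (0:ℝ) ≤ ‖gradient χ x‖ := norm_nonneg _
    have hnb : ‖gradient f x‖ ≤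
        Real.exp (h x) * (χ x * ‖gradient h x‖ + ‖gradient χ x‖) := by
      rw [normgrad f, hdf.fderiv, normgrad h, normgrad χ]
      calc ‖Real.exp (h x) • fderiv ℝ χ x + χ x • (Real.exp (h x) • fderiv ℝ h x)‖
          ≤ ‖Real.exp (h x) • fderiv ℝ χ x‖ + ‖χ x • (Real.exp (h x) • fderiv ℝ h x)‖ :=
            norm_add_le _ _
        _ = Real.exp (h x) * ‖fderiv ℝ χ x‖ + χ x * (Real.exp (h x) * ‖fderiv ℝ h x‖) := by
            rw [norm_smul, norm_smul, norm_smul, Real.norm_eq_abs, Real.norm_eq_abs,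
              abs_of_nonneg (Real.exp_pos _).le, abs_of_nonneg (hχ0 x)]
        _ = Real.exp (h x) * (χ x * ‖fderiv ℝ h x‖ + ‖fderiv ℝ χ x‖) := by ring
    calc ‖gradient f x‖ ^ p
        ≤ (Real.exp (h x) * (χ x * ‖gradient h x‖ + ‖gradient χ x‖)) ^ p :=
          Real.rpow_le_rpow (norm_nonneg _) hnb hp0.le
      _ = Real.exp (h x) ^ p * (χ x * ‖gradient h x‖ + ‖gradient χ x‖) ^ p := by
          rw [Real.mul_rpow (Real.exp_pos _).le (add_nonneg ha hb)]
      _ ≤ Real.exp (h x) ^ p * ((χ x * ‖gradient h x‖) ^ p +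
            2 ^ (p / 2) * (χ x * ‖gradient h x‖) ^ (p / 2) * ‖gradient χ x‖ ^ (p / 2) +
            ‖gradient χ x‖ ^ p) :=
          mul_le_mul_of_nonneg_left (aux_key hp0 hp2 ha hb)
            (Real.rpow_nonneg (Real.exp_pos _).le p)
      _ = g x := by
          simp only [hg]
          rw [Real.mul_rpow (hχ0 x) (norm_nonneg _), Real.mul_rpow (hχ0 x) (norm_nonneg _),
            ← Real.exp_mul, mul_comm (h x) p]
          ring
  -- integrability of the RHS
  have contgrad : ∀ (u : EuclideanSpace ℝ (Fin n) → ℝ), ContDiff ℝ 1 u →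
      Continuous (fun x => gradient u x) := by
    intro u hu
    simp only [gradient]
    exact (InnerProductSpace.toDual ℝ _).symm.continuous.comp (hu.continuous_fderiv one_ne_zero)
  have contp : ∀ (q : ℝ), 0 < q → ∀ (u : EuclideanSpace ℝ (Fin n) → ℝ), Continuous u →
      Continuous (fun x => u x ^ q) := by
    intro q hq u hu
    exact continuous_iff_continuousAt.2 fun x =>
      (Real.continuousAt_rpow_const _ _ (Or.inr hq.le)).comp hu.continuousAt
  have cg : Continuous g := by
    rw [hg]
    refine (Real.continuous_exp.comp (continuous_const.mul hh.continuous)).mul ?_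
    refine Continuous.add (Continuous.add ?_ ?_) ?_
    · exact (contp p hp0 _ hχ.continuous).mul (contp p hp0 _ (contgrad h hh).norm)
    · exact (((continuous_const.mul (contp (p/2) hq2 _ hχ.continuous)).mul
        (contp (p/2) hq2 _ (contgrad h hh).norm)).mul
        (contp (p/2) hq2 _ (contgrad χ hχ).norm))
    · exact contp p hp0 _ (contgrad χ hχ).norm
  have hgsupp : HasCompactSupport g := by
    refine HasCompactSupport.intro hχc ?_
    intro x hx
    have hχx : χ x = 0 := image_eq_zero_of_notMem_tsupport hx
    have hdχx : fderiv ℝ χ x = 0 := by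
      by_contra hne
      exact hx (support_fderiv_subset ℝ (Function.mem_support.2 hne))
    have hgx : gradient χ x = 0 := by simp [gradient, hdχx]
    simp only [hg]
    simp [hχx, hgx, Real.zero_rpow hp0.ne', Real.zero_rpow hq2.ne']
  have hint : Integrable g := cg.integrable_of_hasCompactSupport hgsupp
  exact integral_mono_of_nonneg
    (Filter.Eventually.of_forall fun x => Real.rpow_nonneg (norm_nonneg _) p)
    hint (Filter.Eventually.of_forall hpt)
end

section
/- Let n ≥ 1, let Ω ⊆ ℝⁿ be an open set, let 1 < p < ∞ with conjugate exponent q = p/(p−1). Let u : ℝⁿ → ℝ be differentiable on Ω with u > 0 on Ω, and let Y : ℝⁿ → ℝⁿ be a vector field, differentiable on Ω, with Y(x) = ‖∇u(x)‖^{p−2} ∇u(x) for all x ∈ Ω. Define X(x) = − u(x)^{−(p−1)} Y(x). Then for every x ∈ Ω: ‖X(x)‖^q = ‖∇u(x)‖^p / u(x)^p, and (1−p)‖X(x)‖^q + div X(x) = − div Y(x) / u(x)^{p−1}. In particular, if u is a positive eigenfunction of the p-laplacian with eigenvalue μ, i.e. −div(‖∇u‖^{p−2}∇u) = μ u^{p−1}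 on Ω, then (1−p)‖X‖^q + div X ≡ μ on Ω, showing the lower bound of Theorem 2 is attained. -/
open MeasureTheory

lemma trace_clm_smulRight {n : ℕ} (l : EuclideanSpace ℝ (Fin n) →L[ℝ] ℝ)
    (w : EuclideanSpace ℝ (Fin n)) :
    LinearMap.trace ℝ (EuclideanSpace ℝ (Fin n)) (l.smulRight w).toLinearMap = l w := by
  have h : (l.smulRight w).toLinearMap
      = dualTensorHom ℝ (EuclideanSpace ℝ (Fin n)) (EuclideanSpace ℝ (Fin n))
          ((l : EuclideanSpace ℝ (Fin n) →ₗ[ℝ] ℝ) ⊗ₜ[ℝ] w) := by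
    ext x
    simp [dualTensorHom_apply]
  rw [h, LinearMap.trace_eq_contract_apply, contractLeft_apply]
  rfl

lemma grad_apply {n : ℕ} (u : EuclideanSpace ℝ (Fin n) → ℝ) (x v : EuclideanSpace ℝ (Fin n)) :
    fderiv ℝ u x v = inner ℝ (gradient u x) v := by
  rw [gradient]
  exact (InnerProductSpace.toDual_symm_apply).symm

/-- The field X = −u^{−(p−1)} ‖∇u‖^{p−2}∇u attains the lower bound of Theorem 2. -/
theorem stmt14 {n : ℕ} (hn : 1 ≤ n) (Ω : Set (EuclideanSpace ℝ (Fin n))) (hΩ : IsOpen Ω)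
    (p q : ℝ) (hp : 1 < p) (hq : q = p / (p - 1))
    (u : EuclideanSpace ℝ (Fin n) → ℝ) (hu : DifferentiableOn ℝ u Ω)
    (hupos : ∀ x ∈ Ω, 0 < u x)
    (Y : EuclideanSpace ℝ (Fin n) → EuclideanSpace ℝ (Fin n)) (hY : DifferentiableOn ℝ Y Ω)
    (hYdef : ∀ x ∈ Ω, Y x = ‖gradient u x‖ ^ (p - 2) • gradient u x)
    (X : EuclideanSpace ℝ (Fin n) → EuclideanSpace ℝ (Fin n))
    (hXdef : ∀ x, X x = -((u x) ^ (-(p - 1)) • Y x)) :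
    (∀ x ∈ Ω, ‖X x‖ ^ q = ‖gradient u x‖ ^ p / (u x) ^ p) ∧
    (∀ x ∈ Ω, (1 - p) * ‖X x‖ ^ q + ediv X x = -ediv Y x / (u x) ^ (p - 1)) ∧
    (∀ μ : ℝ, (∀ x ∈ Ω, -ediv Y x = μ * (u x) ^ (p - 1)) →
      ∀ x ∈ Ω, (1 - p) * ‖X x‖ ^ q + ediv X x = μ) := by
  have hp1 : (0:ℝ) < p - 1 := by linarith
  have hppos : (0:ℝ) < p := by linarith
  have hqpos : (0:ℝ) < q := by rw [hq]; positivity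
  have hpq : (p - 1) * q = p := by rw [hq]; field_simp
  -- Part 1
  have part1 : ∀ x ∈ Ω, ‖X x‖ ^ q = ‖gradient u x‖ ^ p / (u x) ^ p := by
    intro x hx
    have hux := hupos x hx
    have hXnorm : ‖X x‖
        = (u x) ^ (-(p-1)) * (‖gradient u x‖ ^ (p-2) * ‖gradient u x‖) := by
      rw [hXdef x, norm_neg, norm_smul, hYdef x hx, norm_smul,
        Real.norm_eq_abs, Real.norm_eq_abs, abs_of_pos (Real.rpow_pos_of_pos hux _),
        abs_of_nonneg (Real.rpow_nonneg (norm_nonneg _) _)]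
    rcases eq_or_ne (gradient u x) 0 with hg | hg
    · rw [hXnorm, hg]
      simp [Real.zero_rpow hqpos.ne', Real.zero_rpow hppos.ne']
    · have hgn : 0 < ‖gradient u x‖ := norm_pos_iff.mpr hg
      have h1 : ‖gradient u x‖ ^ (p-2) * ‖gradient u x‖ = ‖gradient u x‖ ^ (p-1) := by
        have e : p - 1 = (p - 2) + 1 := by ring
        rw [e, Real.rpow_add_one hgn.ne']
      rw [hXnorm, h1, Real.mul_rpow (Real.rpow_nonneg hux.le _) (Real.rpow_nonneg hgn.le _),
        ← Real.rpow_mul hux.le, ← Real.rpow_mul hgn.le, hpq]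
      have e2 : -(p-1) * q = -p := by rw [neg_mul, hpq]
      rw [e2, Real.rpow_neg hux.le, inv_mul_eq_div]
  have part2 : ∀ x ∈ Ω, (1 - p) * ‖X x‖ ^ q + ediv X x = -ediv Y x / (u x) ^ (p - 1) := by
    intro x hx
    have hux := hupos x hx
    have hud : DifferentiableAt ℝ u x := (hu x hx).differentiableAt (hΩ.mem_nhds hx)
    have hYd : DifferentiableAt ℝ Y x := (hY x hx).differentiableAt (hΩ.mem_nhds hx)
    have hc : HasFDerivAt (fun y => u y ^ (-(p-1)))
        ((-(p-1) * u x ^ (-(p-1) - 1)) • fderiv ℝ u x) x :=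
      hud.hasFDerivAt.rpow_const (Or.inl hux.ne')
    have hXfun : X = fun y => -((u y ^ (-(p-1))) • Y y) := funext hXdef
    have hXd : HasFDerivAt X
        (-((u x ^ (-(p-1))) • fderiv ℝ Y x +
          ((-(p-1) * u x ^ (-(p-1) - 1)) • fderiv ℝ u x).smulRight (Y x))) x := by
      rw [hXfun]
      exact (hc.smul hYd.hasFDerivAt).neg
    have hYinner : fderiv ℝ u x (Y x) = ‖gradient u x‖ ^ p := by
      rw [grad_apply, hYdef x hx, real_inner_smul_right, real_inner_self_eq_norm_sq]
      rcases eq_or_ne (gradient u x) 0 with hg | hg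
      · rw [hg]; simp [Real.zero_rpow hppos.ne']
      · have hgn : 0 < ‖gradient u x‖ := norm_pos_iff.mpr hg
        rw [← Real.rpow_natCast ‖gradient u x‖ 2, ← Real.rpow_add hgn]
        norm_num
    have hdivX : ediv X x
        = -((u x ^ (-(p-1))) * ediv Y x
            + (-(p-1) * u x ^ (-(p-1) - 1)) * ‖gradient u x‖ ^ p) := by
      rw [ediv, hXd.fderiv]
      rw [ContinuousLinearMap.coe_neg, ContinuousLinearMap.coe_add, map_neg, map_add]
      rw [ContinuousLinearMap.coe_smul, _root_.map_smul, trace_clm_smulRight]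
      rw [ContinuousLinearMap.smul_apply, hYinner]
      rfl
    rw [part1 x hx, hdivX]
    have eU : u x ^ (-(p-1) - 1) = (u x ^ p)⁻¹ := by
      have e : -(p-1) - 1 = -p := by ring
      rw [e, Real.rpow_neg hux.le]
    have eV : u x ^ (-(p-1)) = (u x ^ (p-1))⁻¹ := Real.rpow_neg hux.le _
    rw [eU, eV]
    have hU : u x ^ p ≠ 0 := (Real.rpow_pos_of_pos hux p).ne'
    have hV : u x ^ (p-1) ≠ 0 := (Real.rpow_pos_of_pos hux (p-1)).ne'
    field_simp
    ring
  refine ⟨part1, part2, ?_⟩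
  intro μ hμ x hx
  rw [part2 x hx, hμ x hx]
  exact mul_div_cancel_right₀ μ (Real.rpow_pos_of_pos (hupos x hx) (p-1)).ne'
end
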